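/- Suppose 𝔪 = Σ_{i∈I} Δ_i is a nonzero multisegment satisfying min 𝔩(𝔪) = min 𝔪, where 𝔩(𝔪) is the highest ladder of the Knuth step. Let d be the maximal depth of 𝔪 and let i₀ ∈ 𝔡^{-1}(d) with Δ_{i₀} ⊇ Δ_i for all i ∈ 𝔡^{-1}(d). Then 𝔡^{-1}(d) = { i ∈ I : b(Δ_i) = min 𝔪 and Δ_i ⊆ Δ_{i₀} }. -/

import Mathlib

/-- A segment `[a,b]` of integers with `a ≤ b`. -/
structure Segment where
  a : ℤ
  b : ℤ
  hle : a ≤ b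

namespace Segment

/-- `s ≪ t` iff both the begin and end points of `s` are strictly smaller. -/
def ll (s t : Segment) : Prop := s.a < t.a ∧ s.b < t.b

/-- Containment of segments: `s ⊆ t`. -/
def sub (s t : Segment) : Prop := t.a ≤ s.a ∧ s.b ≤ t.b

/-- Strict containment of segments: `s ⊊ t`. -/
def ssub (s t : Segment) : Prop := sub s t ∧ s ≠ t

end Segment

/-- There is a `≪`-ascending chain of length `j` in the family `Δ` starting at index `i`. -/
def ChainFrom {I : Type*} (Δ : I → Segment) (i : I) (j : ℕ) : Prop :=
  ∃ f : Fin (j + 1) → I, f 0 = i ∧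
    ∀ r : Fin j, Segment.ll (Δ (f r.castSucc)) (Δ (f r.succ))

/-- `d` is the depth function of the multisegment `Δ`: `d i` is the maximal length of a
`≪`-ascending chain starting at `Δ i`. -/
def IsDepth {I : Type*} (Δ : I → Segment) (d : I → ℕ) : Prop :=
  ∀ i, IsGreatest {j | ChainFrom Δ i j} (d i)

/-- The data of one step of the Knuth (RSK row-extraction) algorithm on a multisegment
`Δ : I → Segment`: the depth function `d`, admissible enumerations `L k` of the depth fibers
(containment-decreasing lists), the permutation `σ` cycling each fiber, and the segments
`Δ' i = [b(Δ i), e(Δ (σ i))]`. -/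
structure KnuthData (I : Type*) where
  Δ : I → Segment
  d : I → ℕ
  σ : Equiv.Perm I
  L : ℕ → List I
  Δ' : I → Segment
  hd : IsDepth Δ d
  hnodup : ∀ k, (L k).Nodup
  hmem : ∀ k i, i ∈ L k ↔ d i = k
  hchain : ∀ k, (L k).Chain' fun p q => Segment.sub (Δ q) (Δ p)
  hσ : ∀ (k : ℕ) (n : ℕ) (hn : n < (L k).length),
    σ ((L k).get ⟨n, hn⟩) =
      (L k).get ⟨(n + 1) % (L k).length,
        Nat.mod_lt _ (Nat.lt_of_le_of_lt (Nat.zero_le n) hn)⟩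
  hΔ'a : ∀ i, (Δ' i).a = (Δ i).a
  hΔ'b : ∀ i, (Δ' i).b = (Δ (σ i)).b

/-- `i` belongs to the ladder index set `Î`: it is the last index of the admissible enumeration
of its depth fiber.  The highest ladder `𝔩(𝔪)` consists of the segments `Δ' i`, `i ∈ Î`, and the
derived multisegment `𝔪'` of the segments `Δ' i`, `i ∉ Î`. -/
theorem chainFrom_cons {I : Type*} {Δ : I → Segment} {i j : I} {n : ℕ}
    (hij : Segment.ll (Δ i) (Δ j)) (h : ChainFrom Δ j n) : ChainFrom Δ i (n + 1) := by
  obtain ⟨f, hf0, hf⟩ := h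
  refine ⟨Fin.cons i f, rfl, fun r => ?_⟩
  induction r using Fin.cases with
  | zero => simpa [hf0] using hij
  | succ s => simpa [← Fin.succ_castSucc] using hf s

theorem chainFrom_tail {I : Type*} {Δ : I → Segment} {i : I} {n : ℕ}
    (h : ChainFrom Δ i (n + 1)) :
    ∃ j, Segment.ll (Δ i) (Δ j) ∧ ChainFrom Δ j n := by
  obtain ⟨f, hf0, hf⟩ := h
  refine ⟨f (Fin.succ 0), ?_, fun r => f r.succ, rfl, fun r => ?_⟩
  · have := hf 0
    simpa [hf0] using this
  · have := hf r.succ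
    simpa [← Fin.succ_castSucc] using this

theorem depth_succ_exists {I : Type*} {Δ : I → Segment} {d : I → ℕ}
    (hd : IsDepth Δ d) {i : I} (hi : 1 ≤ d i) :
    ∃ j, Segment.ll (Δ i) (Δ j) ∧ d j + 1 = d i := by
  obtain ⟨m, hm⟩ := Nat.exists_eq_add_of_le hi
  have hc : ChainFrom Δ i (m + 1) := by
    have := (hd i).1
    rwa [hm, Nat.add_comm] at this
  obtain ⟨j, hij, hcj⟩ := chainFrom_tail hc
  refine ⟨j, hij, ?_⟩
  have h1 : m ≤ d j := (hd j).2 hcj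
  have h2 : d j + 1 ≤ d i := (hd i).2 (chainFrom_cons hij (hd j).1)
  omega

theorem depth_surj {I : Type*} {Δ : I → Segment} {d : I → ℕ}
    (hd : IsDepth Δ d) : ∀ (n : ℕ) (i : I), d i = n → ∀ k ≤ n, ∃ j, d j = k := by
  intro n
  induction n with
  | zero => intro i hi k hk; exact ⟨i, by omega⟩
  | succ m ih =>
      intro i hi k hk
      rcases Nat.eq_or_lt_of_le hk with h | h
      · exact ⟨i, by omega⟩
      · obtain ⟨j, _, hj⟩ := depth_succ_exists hd (i := i) (by omega)
        exact ih j (by omega) k (by omega)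

theorem last_rel {α : Type*} {R : α → α → Prop} (htrans : Transitive R) :
    ∀ {l : List α}, l.Chain' R → ∀ {x : α}, l.getLast? = some x →
      ∀ y ∈ l, y = x ∨ R y x := by
  intro l
  induction l with
  | nil => intro _ x hx; simp at hx
  | cons a t ih =>
      intro hc x hx y hy
      match t with
      | [] =>
          simp at hx hy
          exact Or.inl (hy.trans hx)
      | b :: t' =>
          rw [List.getLast?_cons_cons] at hx
          simp only [List.Chain', List.isChain_cons_cons] at hc
          rcases List.mem_cons.1 hy with rfl | hyt
          · rcases ih hc.2 hx b List.mem_cons_self with rfl | hbx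
            · exact Or.inr hc.1
            · exact Or.inr (htrans hc.1 hbx)
          · exact ih hc.2 hx y hyt

def IhatP {I : Type*} (K : KnuthData I) (i : I) : Prop :=
  (K.L (K.d i)).getLast? = some i

/-- Lemma (sc 1): if `min 𝔩(𝔪) = min 𝔪`, `d` has maximal value `dm`, and `i₀` has depth `dm`
with `Δ i₀` containing every segment of depth `dm`, then the fiber of maximal depth is exactly
`{ i : b(Δ i) = min 𝔪 and Δ i ⊆ Δ i₀ }`. -/
theorem max_depth_fiber_eq {I : Type*} [Fintype I] [Nonempty I] (K : KnuthData I)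
    (m0 : ℤ) (hm0 : IsLeast {x | ∃ i, (K.Δ i).a = x} m0)
    (hml : IsLeast {x | ∃ i, IhatP K i ∧ (K.Δ' i).a = x} m0)
    (dm : ℕ) (hdm : IsGreatest (Set.range K.d) dm)
    (i0 : I) (hi0d : K.d i0 = dm)
    (hi0max : ∀ i, K.d i = dm → Segment.sub (K.Δ i) (K.Δ i0)) :
    ∀ i, K.d i = dm ↔ ((K.Δ i).a = m0 ∧ Segment.sub (K.Δ i) (K.Δ i0)) := by
  classical
  have hle : ∀ i, m0 ≤ (K.Δ i).a := fun i => hm0.2 ⟨i, rfl⟩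
  have hdub : ∀ i, K.d i ≤ dm := fun i => hdm.2 ⟨i, rfl⟩
  have htrans : Transitive (fun p q => Segment.sub (K.Δ q) (K.Δ p)) := by
    intro p q r h1 h2
    exact ⟨h1.1.trans h2.1, h2.2.trans h1.2⟩
  obtain ⟨ihat, hihathat, hihata⟩ := hml.1
  have hihata' : (K.Δ ihat).a = m0 := by rw [← K.hΔ'a]; exact hihata
  have hfiber : ∀ j ∈ K.L (K.d ihat), (K.Δ j).a = m0 := by
    intro j hj
    rcases last_rel htrans (K.hchain (K.d ihat)) hihathat j hj with rfl | hsub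
    · exact hihata'
    · exact le_antisymm (hihata' ▸ hsub.1) (hle j)
  have hkdm : K.d ihat = dm := by
    by_contra hne
    have hk : K.d ihat < dm := lt_of_le_of_ne (hdub ihat) hne
    obtain ⟨iw, hiw⟩ := hdm.1
    obtain ⟨i, hi⟩ := depth_surj K.hd dm iw hiw (K.d ihat + 1) (by omega)
    obtain ⟨j, hij, hj⟩ := depth_succ_exists K.hd (i := i) (by omega)
    have hjm : j ∈ K.L (K.d ihat) := (K.hmem _ j).2 (by omega)
    have hja : (K.Δ j).a = m0 := hfiber j hjm
    have := hij.1
    have := hle i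
    omega
  intro i
  constructor
  · intro hi
    refine ⟨?_, hi0max i hi⟩
    have : i ∈ K.L (K.d ihat) := (K.hmem _ i).2 (by omega)
    exact hfiber i this
  · rintro ⟨ha, hsub⟩
    rcases Nat.eq_zero_or_pos dm with h0 | h1
    · have := hdub i; omega
    · obtain ⟨m, rfl⟩ : ∃ m, dm = m + 1 := ⟨dm - 1, by omega⟩
      have hc : ChainFrom K.Δ i0 (m + 1) := by
        have := (K.hd i0).1
        rwa [hi0d] at this
      obtain ⟨j, hij, hcj⟩ := chainFrom_tail hc
      have hllij : Segment.ll (K.Δ i) (K.Δ j) := by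
        constructor
        · rw [ha]; exact lt_of_le_of_lt (hle i0) hij.1
        · exact lt_of_le_of_lt hsub.2 hij.2
      have h2 : m + 1 ≤ K.d i := (K.hd i).2 (chainFrom_cons hllij hcj)
      have := hdub i
      omega
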